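/- arXiv:1609.08899 — 3 statements merged into one kernel-verified Lean document; each statement's English description precedes it below -/
import Mathlib

section
/- Suppose ν ≥ (1/(4(1−μ)))·min{ ‖u²‖₂²/‖u‖₂⁴ , ‖h‖₂²/μ² }. Then 𝔏'(ν,μ,u,h) ≤ 𝔏(ν,μ,u). (This is Proposition 5.3(i): under this lower bound on ν, the spectral-theory Gaussian bound for the first chaos of a stationary linear Hawkes process improves the direct bound.) -/
open MeasureTheory Real Filter
open scoped ENNReal

/-- The `L^p` norm (with respect to Lebesgue measure on `ℝ`) as a real number. -/
noncomputable def lpNorm (p : ℝ≥0∞) (f : ℝ → ℝ) : ℝ :=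
  (eLpNorm f p volume).toReal

/-- The Gaussian bound `𝔏(ν,μ,u)` of Theorem 5.1 for the first chaos of a stationary
linear Hawkes process. -/
noncomputable def Lbound (ν μ : ℝ) (u : ℝ → ℝ) : ℝ :=
  Real.sqrt (2 / π) * |1 - ν / (1 - μ) * lpNorm 2 u ^ 2|
    + ν / (1 - μ) * lpNorm 3 u ^ 3
    + 2 * Real.sqrt (2 / π) * ν * μ * (2 - μ) / (1 - μ) ^ 2 * lpNorm 2 u ^ 2
    + ν * μ / (1 - μ) ^ 2 * lpNorm 2 u * lpNorm 2 (fun t => u t ^ 2)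

/-- The spectral-theory Gaussian bound `𝔏'(ν,μ,u,h)` of Theorem 5.2. -/
noncomputable def Lbound' (ν μ : ℝ) (u h : ℝ → ℝ) : ℝ :=
  Real.sqrt (2 / π) *
      Real.sqrt ((1 - ν / (1 - μ) * lpNorm 2 u ^ 2) ^ 2
        + ν / (1 - μ) ^ 3 *
            min (μ ^ 2 * lpNorm 2 (fun t => u t ^ 2) ^ 2)
              (lpNorm 2 h ^ 2 * lpNorm 1 (fun t => u t ^ 2) ^ 2))
    + ν / (1 - μ) * lpNorm 3 u ^ 3
    + 2 * Real.sqrt (2 / π) * ν * μ / (1 - μ) ^ 2 * lpNorm 2 u ^ 2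
    + ν * μ / (1 - μ) ^ 2 * lpNorm 2 u * lpNorm 2 (fun t => u t ^ 2)

/-!
The bounds `𝔏'` and `𝔏` differ in their first and third terms. Since `√(X² + e) ≤ |X| + d`
whenever `0 ≤ e ≤ d²`, the square root in `𝔏'` is at most `|1 - ν‖u‖₂²/(1-μ)| + d` with
`d = 2νμ‖u‖₂²/(1-μ)`, and `√(2/π)·d` is exactly the difference between the third terms, since
`μ(2-μ) - μ = μ(1-μ)`. The condition `e ≤ d²` reads
`min{μ²‖u²‖₂², ‖h‖₂²‖u‖₂⁴} ≤ 4ν(1-μ)μ²‖u‖₂⁴` (using `‖u²‖₁ = ‖u‖₂²`), which is the hypothesis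
on `ν` with the denominators of the minimum cleared.
-/

lemma lpNorm_one_sq (u : ℝ → ℝ) : lpNorm 1 (fun t => u t ^ 2) = lpNorm 2 u ^ 2 := by
  have h := eLpNorm_norm_rpow (p := 1) (μ := (volume : Measure ℝ)) u two_pos
  simp only [Real.norm_eq_abs, Real.rpow_two, sq_abs, one_mul, ENNReal.ofReal_ofNat] at h
  rw [_root_.lpNorm, _root_.lpNorm, h, ← ENNReal.toReal_rpow]
  norm_num

lemma min_mul_le_of_min_div_le {a b x y k : ℝ} (hx : 0 ≤ x) (hy : 0 ≤ y)
    (h : min (a / x) (b / y) ≤ k) : min (y * a) (x * b) ≤ k * x * y := by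
  rcases min_le_iff.mp h with ha | hb
  · rcases hx.eq_or_lt with rfl | hx
    · simp
    · have : a ≤ k * x := (div_le_iff₀ hx).mp ha
      calc min (y * a) (x * b) ≤ y * a := min_le_left _ _
        _ ≤ y * (k * x) := mul_le_mul_of_nonneg_left this hy
        _ = k * x * y := by ring
  · rcases hy.eq_or_lt with rfl | hy
    · simp
    · have : b ≤ k * y := (div_le_iff₀ hy).mp hb
      calc min (y * a) (x * b) ≤ x * b := min_le_right _ _
        _ ≤ x * (k * y) := mul_le_mul_of_nonneg_left this hx
        _ = k * x * y := by ring

lemma Real.sqrt_sq_add_le_abs_add {x e d : ℝ} (hd : 0 ≤ d) (he : e ≤ d ^ 2) :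
    √(x ^ 2 + e) ≤ |x| + d := by
  rw [Real.sqrt_le_iff]
  refine ⟨by positivity, ?_⟩
  nlinarith [sq_abs x, abs_nonneg x]

lemma correction_le_sq {ν μ A B H : ℝ} (hν : 0 < ν) (hμ : μ ∈ Set.Ioo (0 : ℝ) 1)
    (hcond : ν ≥ 1 / (4 * (1 - μ)) * min (B ^ 2 / A ^ 4) (H ^ 2 / μ ^ 2)) :
    ν / (1 - μ) ^ 3 * min (μ ^ 2 * B ^ 2) (H ^ 2 * (A ^ 2) ^ 2)
      ≤ (2 * ν * μ * A ^ 2 / (1 - μ)) ^ 2 := by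
  have h1μ : 0 < 1 - μ := by linarith [hμ.2]
  have hmin : min (B ^ 2 / A ^ 4) (H ^ 2 / μ ^ 2) ≤ 4 * (1 - μ) * ν := by
    rwa [ge_iff_le, one_div, inv_mul_le_iff₀ (by positivity)] at hcond
  have hmul := min_mul_le_of_min_div_le (by positivity) (by positivity) hmin
  calc ν / (1 - μ) ^ 3 * min (μ ^ 2 * B ^ 2) (H ^ 2 * (A ^ 2) ^ 2)
      ≤ ν / (1 - μ) ^ 3 * (4 * (1 - μ) * ν * A ^ 4 * μ ^ 2) := by
        rw [← pow_mul, mul_comm (H ^ 2)]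
        gcongr
    _ = (2 * ν * μ * A ^ 2 / (1 - μ)) ^ 2 := by
        field_simp
        ring

theorem prop_5_3_i_general (ν μ : ℝ) (u h : ℝ → ℝ)
    (hν : 0 < ν) (hμ : μ ∈ Set.Ioo (0 : ℝ) 1)
    (hcond : ν ≥ 1 / (4 * (1 - μ)) *
      min (lpNorm 2 (fun t => u t ^ 2) ^ 2 / lpNorm 2 u ^ 4)
        (lpNorm 2 h ^ 2 / μ ^ 2)) :
    Lbound' ν μ u h ≤ Lbound ν μ u := by
  have h1μ : 0 < 1 - μ := by linarith [hμ.2]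
  have hroot := mul_le_mul_of_nonneg_left
    (Real.sqrt_sq_add_le_abs_add (x := 1 - ν / (1 - μ) * lpNorm 2 u ^ 2)
      (by have := hμ.1; positivity) (correction_le_sq hν hμ hcond))
    (Real.sqrt_nonneg (2 / π))
  have hsaving : 2 * √(2 / π) * ν * μ * (2 - μ) / (1 - μ) ^ 2 * lpNorm 2 u ^ 2
      = 2 * √(2 / π) * ν * μ / (1 - μ) ^ 2 * lpNorm 2 u ^ 2
        + √(2 / π) * (2 * ν * μ * lpNorm 2 u ^ 2 / (1 - μ)) := by
    field_simp
    ring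
  rw [Lbound', Lbound, lpNorm_one_sq, hsaving]
  rw [mul_add] at hroot
  linarith

/-- Proposition 5.3(i): if `ν ≥ (1/(4(1−μ)))·min{‖u²‖₂²/‖u‖₂⁴, ‖h‖₂²/μ²}` then
`𝔏'(ν,μ,u,h) ≤ 𝔏(ν,μ,u)`. Here `h` is the reproduction kernel of a stationary linear
Hawkes process, viewed as a function on `ℝ` vanishing on `(-∞,0]`, with
`∫₀^∞ h = μ < 1`. -/
theorem prop_5_3_i (ν μ : ℝ) (u h : ℝ → ℝ)
    (hν : 0 < ν) (hμ : μ ∈ Set.Ioo (0 : ℝ) 1)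
    (hu1 : MemLp u 1 volume) (hu2 : MemLp u 2 volume)
    (hu3 : MemLp u 3 volume) (hu4 : MemLp u 4 volume)
    (hu0 : ¬ u =ᵐ[volume] 0)
    (hhm : Measurable h) (hh0 : ∀ x, 0 ≤ h x) (hhneg : ∀ x ≤ 0, h x = 0)
    (hh1 : Integrable h volume) (hh2 : MemLp h 2 volume)
    (hhμ : ∫ x, h x = μ)
    (hcond : ν ≥ 1 / (4 * (1 - μ)) *
      min (lpNorm 2 (fun t => u t ^ 2) ^ 2 / lpNorm 2 u ^ 4)
        (lpNorm 2 h ^ 2 / μ ^ 2)) :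
    Lbound' ν μ u h ≤ Lbound ν μ u :=
  prop_5_3_i_general ν μ u h hν hμ hcond
end

section
/- Let t ∈ ℝ. Let r : ℝ → [0,∞) be measurable, integrable, vanishing on (−∞,0], with ρ := ∫_ℝ r(x) dx < 1. Let p, q : ℝ → [0,∞) be measurable, with q vanishing on (−∞,t], q bounded on every bounded interval, and suppose q(s) ≤ p(s) + (r∗q)(s) for every s ∈ ℝ. Then for every s ∈ ℝ, q(s) ≤ Σ_{i=0}^∞ (r^{∗i} ∗ p)(s), where r^{∗0}∗p := p, r^{∗i} denotes the i-fold convolution of r with itself, and (f∗g)(s) := ∫_ℝ f(s−u) g(u) du. -/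
open MeasureTheory Real Filter
open scoped ENNReal

/-- Convolution of `[0,∞]`-valued functions on `ℝ` (Lebesgue measure), defined
pointwise: `(f ∗ g)(s) = ∫ f(s−u) g(u) du`. -/
noncomputable def econv (f g : ℝ → ℝ≥0∞) : ℝ → ℝ≥0∞ :=
  fun s => ∫⁻ u, f (s - u) * g u

/-- `convIter r p i = r^{∗i} ∗ p`, with `convIter r p 0 = p`. -/
noncomputable def convIter (r p : ℝ → ℝ≥0∞) : ℕ → ℝ → ℝ≥0∞
  | 0 => p
  | n + 1 => econv r (convIter r p n)

/-!
Iterating `q ≤ p + r ∗ q` gives `q ≤ Σ_{i<n} r^{∗i} ∗ p + r^{∗n} ∗ q`. Since `r` lives on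
`(0, ∞)`, the values of `r^{∗n} ∗ q` on `(-∞, s]` only see those of `q` on `(-∞, s]`, where
`q` is bounded by some `C` (it vanishes left of `t`); hence `(r^{∗n} ∗ q)(s) ≤ C ρⁿ → 0`
with `ρ = ∫ r < 1`.
-/

open scoped Topology

section Convolution

variable {f g : ℝ → ℝ≥0∞}

theorem measurable_econv (hf : Measurable f) (hg : Measurable g) : Measurable (econv f g) :=
  Measurable.lintegral_prod_right ((hf.comp (measurable_fst.sub measurable_snd)).mul
    (hg.comp measurable_snd))

theorem measurable_convIter (hf : Measurable f) (hg : Measurable g) (n : ℕ) :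
    Measurable (convIter f g n) := by
  induction n with
  | zero => exact hg
  | succ n ih => exact measurable_econv hf ih

theorem econv_mono_right {g₁ g₂ : ℝ → ℝ≥0∞} (h : ∀ u, g₁ u ≤ g₂ u) (s : ℝ) :
    econv f g₁ s ≤ econv f g₂ s :=
  lintegral_mono fun u => mul_le_mul_right (h u) _

theorem econv_add_right (hf : Measurable f) (hg : Measurable g) (h : ℝ → ℝ≥0∞) (s : ℝ) :
    econv f (fun u => g u + h u) s = econv f g s + econv f h s := by
  simp only [econv, mul_add]
  exact lintegral_add_left ((hf.comp (measurable_const.sub measurable_id)).mul hg) _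

theorem econv_finsetSum_right {ι : Type*} (I : Finset ι) {g : ι → ℝ → ℝ≥0∞}
    (hf : Measurable f) (hg : ∀ i ∈ I, Measurable (g i)) (s : ℝ) :
    econv f (fun u => ∑ i ∈ I, g i u) s = ∑ i ∈ I, econv f (g i) s := by
  simp only [econv, Finset.mul_sum]
  exact lintegral_finsetSum I fun i hi =>
    (hf.comp (measurable_const.sub measurable_id)).mul (hg i hi)

theorem econv_le_of_le_on_Iic (hf0 : ∀ x < 0, f x = 0) (hf : Measurable f) {C : ℝ≥0∞}
    {a : ℝ} (hg : ∀ u ≤ a, g u ≤ C) {s : ℝ} (hs : s ≤ a) :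
    econv f g s ≤ (∫⁻ x, f x) * C := by
  have hpoint : ∀ u, f (s - u) * g u ≤ f (s - u) * C := by
    intro u
    rcases le_or_gt u s with hu | hu
    · exact mul_le_mul_right (hg u (hu.trans hs)) _
    · simp [hf0 (s - u) (by linarith)]
  calc econv f g s ≤ ∫⁻ u, f (s - u) * C := lintegral_mono hpoint
    _ = (∫⁻ x, f x) * C := by
      rw [lintegral_mul_const _ (by fun_prop), lintegral_sub_left_eq_self]

end Convolution

section Iteration

variable {f g : ℝ → ℝ≥0∞}

theorem sum_range_succ_convIter (hf : Measurable f) (hg : Measurable g) (n : ℕ) (s : ℝ) :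
    ∑ i ∈ Finset.range (n + 1), convIter f g i s =
      g s + econv f (fun u => ∑ i ∈ Finset.range n, convIter f g i u) s := by
  rw [Finset.sum_range_succ', econv_finsetSum_right _ hf fun i _ => measurable_convIter hf hg i,
    add_comm]
  rfl

theorem le_sum_convIter_add_convIter (hf : Measurable f) (hg : Measurable g) {q : ℝ → ℝ≥0∞}
    (hrec : ∀ s, q s ≤ g s + econv f q s) (n : ℕ) (s : ℝ) :
    q s ≤ ∑ i ∈ Finset.range n, convIter f g i s + convIter f q n s := by
  induction n generalizing s with
  | zero => simp [convIter]
  | succ n ih =>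
    calc q s ≤ g s + econv f q s := hrec s
      _ ≤ g s + econv f (fun u => ∑ i ∈ Finset.range n, convIter f g i u + convIter f q n u) s :=
        add_le_add_right (econv_mono_right ih s) _
      _ = g s + econv f (fun u => ∑ i ∈ Finset.range n, convIter f g i u) s
            + convIter f q (n + 1) s := by
        rw [econv_add_right hf (Finset.measurable_sum _ fun i _ => measurable_convIter hf hg i),
          add_assoc]
        rfl
      _ = ∑ i ∈ Finset.range (n + 1), convIter f g i s + convIter f q (n + 1) s := by
        rw [sum_range_succ_convIter hf hg]

theorem convIter_le_of_le_on_Iic (hf0 : ∀ x < 0, f x = 0) (hf : Measurable f) {C : ℝ≥0∞}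
    {a : ℝ} (hg : ∀ u ≤ a, g u ≤ C) (n : ℕ) {s : ℝ} (hs : s ≤ a) :
    convIter f g n s ≤ (∫⁻ x, f x) ^ n * C := by
  induction n generalizing s with
  | zero => simpa [convIter] using hg s hs
  | succ n ih =>
    calc convIter f g (n + 1) s ≤ (∫⁻ x, f x) * ((∫⁻ x, f x) ^ n * C) :=
          econv_le_of_le_on_Iic hf0 hf (fun u hu => ih hu) hs
      _ = (∫⁻ x, f x) ^ (n + 1) * C := by ring

theorem le_tsum_convIter_of_le_add_econv (hf0 : ∀ x < 0, f x = 0) (hf : Measurable f)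
    (hmass : ∫⁻ x, f x < 1) (hg : Measurable g) {q : ℝ → ℝ≥0∞}
    (hrec : ∀ s, q s ≤ g s + econv f q s) {s : ℝ} {C : ℝ≥0∞} (hC : C ≠ ∞)
    (hq : ∀ u ≤ s, q u ≤ C) :
    q s ≤ ∑' i, convIter f g i s := by
  have htail : Tendsto (fun n => (∫⁻ x, f x) ^ n * C) atTop (𝓝 0) := by
    simpa using ENNReal.Tendsto.mul_const (ENNReal.tendsto_pow_atTop_nhds_zero_of_lt_one hmass)
      (Or.inr hC)
  refine ge_of_tendsto (by simpa using tendsto_const_nhds.add htail) (Eventually.of_forall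
    fun n => ?_)
  exact (le_sum_convIter_add_convIter hf hg hrec n s).trans
    (add_le_add (ENNReal.sum_le_tsum _) (convIter_le_of_le_on_Iic hf0 hf hq n le_rfl))

end Iteration

theorem renewal_iteration_general (t : ℝ) (r p q : ℝ → ℝ)
    (hrm : Measurable r) (hr0 : ∀ x, 0 ≤ r x) (hrneg : ∀ x ≤ (0 : ℝ), r x = 0)
    (hrint : Integrable r volume) (hρ : ∫ x, r x < 1)
    (hpm : Measurable p)
    (hqt : ∀ x ≤ t, q x = 0)
    (hqb : ∀ a b : ℝ, ∃ C : ℝ, ∀ x ∈ Set.Icc a b, q x ≤ C)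
    (hrec : ∀ s : ℝ, ENNReal.ofReal (q s) ≤ ENNReal.ofReal (p s)
      + econv (fun x => ENNReal.ofReal (r x)) (fun x => ENNReal.ofReal (q x)) s) :
    ∀ s : ℝ, ENNReal.ofReal (q s) ≤
      ∑' i : ℕ, convIter (fun x => ENNReal.ofReal (r x))
        (fun x => ENNReal.ofReal (p x)) i s := by
  intro s
  obtain ⟨C, hC⟩ := hqb t s
  have hmass : ∫⁻ x, ENNReal.ofReal (r x) < 1 := by
    rw [← ofReal_integral_eq_lintegral_ofReal hrint (Eventually.of_forall hr0)]
    exact ENNReal.ofReal_lt_one.2 hρ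
  have hbound : ∀ u ≤ s, ENNReal.ofReal (q u) ≤ ENNReal.ofReal C := by
    intro u hu
    rcases le_or_gt u t with hut | htu
    · simp [hqt u hut]
    · exact ENNReal.ofReal_le_ofReal (hC u ⟨htu.le, hu⟩)
  exact le_tsum_convIter_of_le_add_econv (fun x hx => by simp [hrneg x hx.le])
    hrm.ennreal_ofReal hmass hpm.ennreal_ofReal hrec ENNReal.ofReal_ne_top hbound

/-- The renewal-type iteration lemma used in the proof of Theorem 4.1: if
`q ≤ p + r∗q` pointwise, `r` is nonnegative, integrable, supported on `(0,∞)` with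
`∫ r < 1`, and `q` is nonnegative, vanishes on `(−∞,t]` and is bounded on bounded
intervals, then `q(s) ≤ Σ_{i=0}^∞ (r^{∗i} ∗ p)(s)` for all `s` (with `r^{∗0}∗p = p`). -/
theorem renewal_iteration (t : ℝ) (r p q : ℝ → ℝ)
    (hrm : Measurable r) (hr0 : ∀ x, 0 ≤ r x) (hrneg : ∀ x ≤ (0 : ℝ), r x = 0)
    (hrint : Integrable r volume) (hρ : ∫ x, r x < 1)
    (hpm : Measurable p) (hp0 : ∀ x, 0 ≤ p x)
    (hqm : Measurable q) (hq0 : ∀ x, 0 ≤ q x) (hqt : ∀ x ≤ t, q x = 0)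
    (hqb : ∀ a b : ℝ, ∃ C : ℝ, ∀ x ∈ Set.Icc a b, q x ≤ C)
    (hrec : ∀ s : ℝ, ENNReal.ofReal (q s) ≤ ENNReal.ofReal (p s)
      + econv (fun x => ENNReal.ofReal (r x)) (fun x => ENNReal.ofReal (q x)) s) :
    ∀ s : ℝ, ENNReal.ofReal (q s) ≤
      ∑' i : ℕ, convIter (fun x => ENNReal.ofReal (r x))
        (fun x => ENNReal.ofReal (p x)) i s :=
  renewal_iteration_general t r p q hrm hr0 hrneg hrint hρ hpm hqt hqb hrec
end

section
/- Let h : ℝ → [0,∞) be measurable, locally bounded, vanishing on (−∞,0], and integrable with μ := ∫_ℝ h(x) dx, and let α > 0 satisfy αμ < 1. Then for every x > 0, Σ_{i=1}^∞ αⁱ h^{∗i}(x) ≤ (α/(1−αμ)) · sup_{u ∈ [0,x]} h(u). -/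
open MeasureTheory Real Filter
open scoped ENNReal

/-- The pointwise geometric-series bound from the proof of Theorem 4.1: for `h ≥ 0`
measurable, locally bounded, vanishing on `(−∞,0]`, integrable with `μ = ∫ h`, and
`α > 0` with `αμ < 1`, for every `x > 0` one has
`Σ_{i=1}^∞ αⁱ h^{∗i}(x) ≤ (α/(1−αμ)) · sup_{u ∈ [0,x]} h(u)`,
where `h^{∗i}` (for `i ≥ 1`) is encoded as `convIter H H (i-1)`. -/
theorem series_conv_pow_pointwise_bound (h : ℝ → ℝ) (α μ : ℝ)
    (hhm : Measurable h) (hh0 : ∀ x, 0 ≤ h x) (hhneg : ∀ x ≤ (0 : ℝ), h x = 0)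
    (hhloc : ∀ a b : ℝ, BddAbove (h '' Set.Icc a b))
    (hhint : Integrable h volume) (hμ : ∫ x, h x = μ)
    (hα : 0 < α) (hαμ : α * μ < 1) :
    ∀ x > (0 : ℝ),
      ∑' i : ℕ, ENNReal.ofReal (α ^ (i + 1)) *
          convIter (fun y => ENNReal.ofReal (h y)) (fun y => ENNReal.ofReal (h y)) i x
        ≤ ENNReal.ofReal (α / (1 - α * μ) * sSup (h '' Set.Icc 0 x)) := by
  intro x hx
  set H : ℝ → ℝ≥0∞ := fun y => ENNReal.ofReal (h y) with hH
  set S : ℝ := sSup (h '' Set.Icc 0 x) with hS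
  have hμ0 : 0 ≤ μ := hμ ▸ integral_nonneg hh0
  have hS0 : 0 ≤ S := le_trans (hh0 0) (le_csSup (hhloc 0 x) ⟨0, by constructor <;> simp [le_of_lt hx], rfl⟩)
  have hHm : Measurable H := ENNReal.measurable_ofReal.comp hhm
  -- ∫⁻ H(y - u) du = ofReal μ
  have hint : ∀ y : ℝ, (∫⁻ u, H (y - u)) = ENNReal.ofReal μ := by
    intro y
    have h1 : (∫⁻ u, H (y - u)) = ∫⁻ u, H u :=
      (Measure.measurePreserving_sub_left volume y).lintegral_comp hHm
    rw [h1, ← hμ, ofReal_integral_eq_lintegral_ofReal hhint (Filter.Eventually.of_forall hh0)]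
  -- key bound
  have key : ∀ i : ℕ, ∀ y ≤ x, convIter H H i y ≤ ENNReal.ofReal (μ ^ i) * ENNReal.ofReal S := by
    intro i
    induction i with
    | zero =>
      intro y hy
      simp only [convIter, pow_zero, ENNReal.ofReal_one, one_mul, hH]
      rcases le_or_gt y 0 with h0 | h0
      · simp [hhneg y h0, hS0]
      · exact ENNReal.ofReal_le_ofReal (le_csSup (hhloc 0 x) ⟨y, ⟨le_of_lt h0, hy⟩, rfl⟩)
    | succ n ih =>
      intro y hy
      have step : convIter H H (n + 1) y
          ≤ ∫⁻ u, H (y - u) * (ENNReal.ofReal (μ ^ n) * ENNReal.ofReal S) := by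
        refine lintegral_mono fun u => ?_
        rcases le_or_gt u x with hux | hux
        · exact mul_le_mul_right (ih u hux) _
        · have : h (y - u) = 0 := hhneg _ (by linarith)
          simp [hH, this]
      calc convIter H H (n + 1) y
          ≤ ∫⁻ u, H (y - u) * (ENNReal.ofReal (μ ^ n) * ENNReal.ofReal S) := step
        _ = (∫⁻ u, H (y - u)) * (ENNReal.ofReal (μ ^ n) * ENNReal.ofReal S) :=
            lintegral_mul_const _ (hHm.comp (measurable_const.sub measurable_id))
        _ = ENNReal.ofReal μ * (ENNReal.ofReal (μ ^ n) * ENNReal.ofReal S) := by rw [hint y]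
        _ = ENNReal.ofReal (μ ^ (n + 1)) * ENNReal.ofReal S := by
            rw [← mul_assoc, ← ENNReal.ofReal_mul hμ0, pow_succ, mul_comm (μ ^ n) μ]
  -- sum up
  have hsum : ∑' i : ℕ, ENNReal.ofReal (α ^ (i + 1)) * convIter H H i x
      ≤ ∑' i : ℕ, ENNReal.ofReal α * (ENNReal.ofReal ((α * μ) ^ i) * ENNReal.ofReal S) := by
    refine ENNReal.tsum_le_tsum fun i => ?_
    calc ENNReal.ofReal (α ^ (i + 1)) * convIter H H i x
        ≤ ENNReal.ofReal (α ^ (i + 1)) * (ENNReal.ofReal (μ ^ i) * ENNReal.ofReal S) :=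
          mul_le_mul_right (key i x le_rfl) _
      _ = ENNReal.ofReal (α ^ (i + 1) * (μ ^ i * S)) := by
          rw [ENNReal.ofReal_mul (by positivity), ENNReal.ofReal_mul (by positivity)]
      _ = ENNReal.ofReal (α * ((α * μ) ^ i * S)) := by congr 1; ring
      _ = ENNReal.ofReal α * (ENNReal.ofReal ((α * μ) ^ i) * ENNReal.ofReal S) := by
          rw [ENNReal.ofReal_mul hα.le, ENNReal.ofReal_mul (by positivity)]
  refine le_trans hsum ?_
  have hαμ0 : 0 ≤ α * μ := mul_nonneg hα.le hμ0
  have hgeom : ∑' i : ℕ, ENNReal.ofReal ((α * μ) ^ i) = ENNReal.ofReal (1 / (1 - α * μ)) := by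
    have : ∀ i : ℕ, ENNReal.ofReal ((α * μ) ^ i) = ENNReal.ofReal (α * μ) ^ i := by
      intro i; rw [ENNReal.ofReal_pow hαμ0]
    simp_rw [this, ENNReal.tsum_geometric]
    rw [← ENNReal.ofReal_one, ← ENNReal.ofReal_sub _ hαμ0,
      ← ENNReal.ofReal_inv_of_pos (by linarith), one_div]
  have h1αμ : (0:ℝ) < 1 - α * μ := by linarith
  rw [ENNReal.tsum_mul_left, ENNReal.tsum_mul_right, hgeom,
    ← ENNReal.ofReal_mul (by positivity), ← ENNReal.ofReal_mul hα.le]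
  apply ENNReal.ofReal_le_ofReal
  apply le_of_eq
  field_simp
end
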